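/- The thresholding operator S of the logdet proximal map shrinks smaller inputs more: for x ≥ y ≥ 0 with both nonzero outputs, the shrinkage amount x − S(x) is at most y − S(y). Concretely, the map x ↦ x − (c₁ + sqrt(c₂))/2, where c₁ = x − ε and c₂ = (x−ε)² − 4(β/η − εx), is nonincreasing on the region where c₂ > 0 and x ≥ ε. -/

import Mathlib

/-! Since `c₂(x) = (x + ε)² - 4t`, the shrinkage is `D(x) = (u - √(u² - 4t)) / 2` with `u = x + ε`,
and for `t ≥ 0` the map `u ↦ u - √(u² - t)` is antitone on `u ≥ √t`: the roots `√(u² - t)` grow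
at least as fast as `u`, because `√(b² - t) + √(a² - t) ≤ b + a` while their squares differ by
`b² - a²`. -/

theorem antitoneOn_sub_sqrt_sq_sub {t : ℝ} (ht : 0 ≤ t) :
    AntitoneOn (fun u : ℝ => u - √(u ^ 2 - t)) {u | t ≤ u ^ 2 ∧ 0 ≤ u} := by
  rintro a ⟨hta, ha⟩ b ⟨htb, hb⟩ hab
  have hsa : √(a ^ 2 - t) ^ 2 = a ^ 2 - t := Real.sq_sqrt (by linarith)
  have hsb : √(b ^ 2 - t) ^ 2 = b ^ 2 - t := Real.sq_sqrt (by linarith)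
  have hsa_le : √(a ^ 2 - t) ≤ a := Real.sqrt_le_iff.mpr ⟨ha, by linarith⟩
  have hsb_le : √(b ^ 2 - t) ≤ b := Real.sqrt_le_iff.mpr ⟨hb, by linarith⟩
  show b - √(b ^ 2 - t) ≤ a - √(a ^ 2 - t)
  nlinarith [Real.sqrt_nonneg (a ^ 2 - t), Real.sqrt_nonneg (b ^ 2 - t),
    mul_le_mul_of_nonneg_left hsa_le (sub_nonneg.mpr hab)]

/-- The logdet thresholding operator shrinks smaller inputs more: the shrinkage
amount `D(x) = x - S(x)`, where `S(x) = ((x - ε) + √c₂(x))/2` with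
`c₂(x) = (x - ε)² - 4(t - εx)` and `t = β/η`, is nonincreasing on the region
`{x | c₂(x) > 0 ∧ x ≥ ε}`. -/
theorem logdet_shrinkage_antitone (β η ε : ℝ) (hβ : 0 < β) (hη : 0 < η)
    (hε : 0 < ε) :
    AntitoneOn
      (fun x : ℝ => x -
        ((x - ε) + Real.sqrt ((x - ε) ^ 2 - 4 * (β / η - ε * x))) / 2)
      {x : ℝ | 0 < (x - ε) ^ 2 - 4 * (β / η - ε * x) ∧ ε ≤ x} := by
  have hc₂ (x : ℝ) : (x - ε) ^ 2 - 4 * (β / η - ε * x) = (x + ε) ^ 2 - 4 * (β / η) := by ring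
  rintro a ⟨hca, hεa⟩ b ⟨hcb, hεb⟩ hab
  rw [hc₂] at hca hcb
  have key := antitoneOn_sub_sqrt_sq_sub (t := 4 * (β / η)) (by positivity)
    ⟨by linarith, by linarith⟩ ⟨by linarith, by linarith⟩ (by linarith : a + ε ≤ b + ε)
  simp only [hc₂] at key ⊢
  linarith
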